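/- arXiv:math/0607060 — 2 statements merged into one kernel-verified Lean document; each statement's English description precedes it below -/
import Mathlib

section
/- Let P be a root pairing (RootPairing ι R M N) over a commutative ring R with ι finite, and define the discriminant D : N → R by D(x) = ∏_{i ∈ ι} ⟨αᵢ, x⟩, where ⟨αᵢ, x⟩ denotes the pairing of the root αᵢ = P.root i with x ∈ N. Then D is invariant under the Weyl group: for every index j and every x ∈ N, D applied to the coreflection in the j-th root of x equals D(x). -/
namespace RootPairing

variable {ι R M N : Type*} [CommRing R] [AddCommGroup M] [Module R M] [AddCommGroup N]
  [Module R N] (P : RootPairing ι R M N)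

/-- The coreflection `s_j^∨` is the transpose of `s_j`, and `s_j` permutes the roots. -/
lemma root'_coreflection (i j : ι) (x : N) :
    P.root' i (P.coreflection j x) = P.root' (P.reflectionPerm j i) x :=
  P.flip.coroot'_reflection x

end RootPairing

/-- The discriminant `D(x) = ∏ᵢ ⟨αᵢ, x⟩` of a root pairing is invariant under every
coreflection, hence under the Weyl group. -/
theorem discriminant_weyl_invariant {ι R M N : Type*} [CommRing R]
    [AddCommGroup M] [Module R M] [AddCommGroup N] [Module R N] [Fintype ι]
    (P : RootPairing ι R M N) (j : ι) (x : N) :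
    (∏ i : ι, P.toLinearMap (P.root i) (P.coreflection j x)) =
      ∏ i : ι, P.toLinearMap (P.root i) x :=
  Fintype.prod_equiv (P.reflectionPerm j) _ _ fun i => P.root'_coreflection i j x
end

section
/- Let P be a root pairing (RootPairing ι K M N) over a field K with ι finite, and let φ ∈ N satisfy ⟨αᵢ, φ⟩ ≠ 0 for every root αᵢ. Then the discriminant ratio ∑_{i ∈ ι} ⟨αᵢ, β⟩ / ⟨αᵢ, φ⟩ is invariant under the simultaneous Weyl-group action: for every index j and every β ∈ N, replacing both β and φ by their images under the coreflection in the j-th root leaves the sum unchanged. -/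
open Finset

namespace RootPairing

variable {ι R M N : Type*} [CommRing R] [AddCommGroup M] [Module R M] [AddCommGroup N]
  [Module R N] (P : RootPairing ι R M N)

lemma toLinearMap_apply_coreflection (i : ι) (m : M) (x : N) :
    P.toLinearMap m (P.coreflection i x) = P.toLinearMap (P.reflection i m) x :=
  (LinearMap.congr_fun (LinearMap.congr_fun (P.reflection_dualMap_eq_coreflection i) x) m).symm

lemma toLinearMap_root_coreflection (i j : ι) (x : N) :
    P.toLinearMap (P.root i) (P.coreflection j x) =
      P.toLinearMap (P.root (P.reflectionPerm j i)) x := by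
  rw [toLinearMap_apply_coreflection, root_reflectionPerm]

end RootPairing

theorem discriminant_ratio_weyl_invariant_general {ι K M N : Type*} [Field K]
    [AddCommGroup M] [Module K M] [AddCommGroup N] [Module K N] [Fintype ι]
    (P : RootPairing ι K M N) (φ : N) (j : ι) (β : N) :
    (∑ i : ι, P.toLinearMap (P.root i) (P.coreflection j β) /
        P.toLinearMap (P.root i) (P.coreflection j φ)) =
      ∑ i : ι, P.toLinearMap (P.root i) β / P.toLinearMap (P.root i) φ := by
  simp only [P.toLinearMap_root_coreflection]
  exact Equiv.sum_comp (P.reflectionPerm j)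
    (fun i => P.toLinearMap (P.root i) β / P.toLinearMap (P.root i) φ)

/-- The discriminant ratio `∑ᵢ ⟨αᵢ, β⟩/⟨αᵢ, φ⟩` of a root pairing over a field is
invariant under the simultaneous action of a coreflection on `β` and `φ`. -/
theorem discriminant_ratio_weyl_invariant {ι K M N : Type*} [Field K]
    [AddCommGroup M] [Module K M] [AddCommGroup N] [Module K N] [Fintype ι]
    (P : RootPairing ι K M N) (φ : N)
    (hφ : ∀ i : ι, P.toLinearMap (P.root i) φ ≠ 0) (j : ι) (β : N) :
    (∑ i : ι, P.toLinearMap (P.root i) (P.coreflection j β) /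
        P.toLinearMap (P.root i) (P.coreflection j φ)) =
      ∑ i : ι, P.toLinearMap (P.root i) β / P.toLinearMap (P.root i) φ :=
  discriminant_ratio_weyl_invariant_general P φ j β
end
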